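/- Every cograph on at least 2 vertices contains a pair of vertices that are either false twins or true twins. -/

import Mathlib

/-!
By Seinsche's theorem, a cograph on at least two vertices is disconnected or has a disconnected
complement: if `G` and `Gᶜ` were both connected while `G - x` is disconnected, a non-neighbour `y`
of `x` is joined inside its component of `G - x` to a neighbour of `x`, giving an edge `p q` with
`p ≁ x ∼ q`, and a neighbour `d` of `x` in another component yields the induced path `p q x d`.
Passing to the complement if necessary, some union of components `S` is proper and nonempty; twins
of the smaller cograph induced on `S` or on its complement are twins of the whole graph, and if
both have at most one vertex the two vertices of the graph are twins.
-/

/-- A cograph is a graph with no induced subgraph isomorphic to the path `P₄`. -/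
def IsCograph {V : Type*} (G : SimpleGraph V) : Prop :=
  IsEmpty (SimpleGraph.pathGraph 4 ↪g G)

namespace SimpleGraph

variable {V : Type*} {G : SimpleGraph V} {u v : V}

/-- For `u ≠ v` this says that `u, v` are false twins or true twins, according to `G.Adj u v`. -/
def Twins (G : SimpleGraph V) (u v : V) : Prop :=
  ∀ w, w ≠ u → w ≠ v → (G.Adj u w ↔ G.Adj v w)

@[simp]
theorem twins_compl : Gᶜ.Twins u v ↔ G.Twins u v := by
  refine forall_congr' fun w => forall_congr' fun hwu => forall_congr' fun hwv => ?_
  simp only [compl_adj, ne_eq, Ne.symm hwu, Ne.symm hwv, not_false_eq_true, true_and, not_iff_not]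

theorem Twins.adj_iff_adj_of_not_adj (h : G.Twins u v) (huv : ¬G.Adj u v) (w : V) :
    G.Adj u w ↔ G.Adj v w := by
  by_cases hwu : w = u
  · subst hwu
    exact iff_of_false G.irrefl (fun h => huv h.symm)
  by_cases hwv : w = v
  · subst hwv
    exact iff_of_false huv G.irrefl
  exact h w hwu hwv

theorem Twins.of_induce {S : Set V} (hS : ∀ a b, G.Adj a b → (a ∈ S ↔ b ∈ S)) {u v : S}
    (h : (G.induce S).Twins u v) : G.Twins u v := by
  intro w hwu hwv
  by_cases hw : w ∈ S
  · exact h ⟨w, hw⟩ (fun h => hwu (congrArg Subtype.val h)) (fun h => hwv (congrArg Subtype.val h))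
  · exact iff_of_false (fun h => hw ((hS _ _ h).1 u.2)) (fun h => hw ((hS _ _ h).1 v.2))

theorem not_reachable_of_forall_adj_mem {S : Set V} (hS : ∀ a ∈ S, ∀ b, G.Adj a b → b ∈ S)
    (hu : u ∈ S) (hv : v ∉ S) : ¬G.Reachable u v := by
  rintro ⟨p⟩
  obtain ⟨d, -, hd, hd'⟩ := p.exists_boundary_dart S hu hv
  exact hd' (hS _ hd _ d.adj)

theorem Reachable.exists_adj_boundary {P : V → Prop} (h : G.Reachable u v) (hu : P u)
    (hv : ¬P v) : ∃ p q, G.Reachable u p ∧ G.Adj p q ∧ P p ∧ ¬P q := by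
  by_contra! hno
  refine not_reachable_of_forall_adj_mem (S := {w | G.Reachable u w ∧ P w}) ?_ ⟨.rfl, hu⟩
    (fun hv' => hv hv'.2) h
  rintro a ⟨hua, ha⟩ b hab
  exact ⟨hua.trans hab.reachable, hno a b hua hab ha⟩

theorem not_preconnected_of_forall_not_adj [Nontrivial V] {x : V} (hx : ∀ y, ¬G.Adj x y) :
    ¬G.Preconnected := by
  obtain ⟨y, hy⟩ := exists_ne x
  refine fun h => not_reachable_of_forall_adj_mem (S := {x}) ?_ rfl hy (h x y)
  rintro _ rfl b hb
  exact absurd hb (hx b)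

theorem induce_compl (G : SimpleGraph V) (S : Set V) : Gᶜ.induce S = (G.induce S)ᶜ := by
  ext a b
  simp [Subtype.ext_iff]

theorem exists_twins_of_not_preconnected (hG : ¬G.Preconnected)
    (hsub : ∀ S : Set V, (∃ w, w ∉ S) → Nontrivial S → ∃ a b : S, a ≠ b ∧ (G.induce S).Twins a b) :
    ∃ u v, u ≠ v ∧ G.Twins u v := by
  obtain ⟨u, v, huv⟩ : ∃ u v, ¬G.Reachable u v := by
    simpa only [Preconnected, not_forall] using hG
  have of_union_components (S : Set V) (hS : ∀ a b, G.Adj a b → (a ∈ S ↔ b ∈ S))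
      (hSne : ∃ w, w ∉ S) (_ : Nontrivial S) : ∃ u v, u ≠ v ∧ G.Twins u v := by
    obtain ⟨a, b, hab, htw⟩ := hsub S hSne ‹_›
    exact ⟨a, b, Subtype.coe_injective.ne hab, htw.of_induce hS⟩
  set S := {w | G.Reachable u w}
  have hS : ∀ a b, G.Adj a b → (a ∈ S ↔ b ∈ S) := fun a b hab =>
    ⟨fun ha => ha.trans hab.reachable, fun hb => hb.trans hab.symm.reachable⟩
  by_cases hSnt : Nontrivial S
  · exact of_union_components S hS ⟨v, huv⟩ hSnt
  by_cases hScnt : Nontrivial ↥Sᶜ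
  · exact of_union_components Sᶜ (fun a b hab => not_congr (hS a b hab)) ⟨u, not_not.2 .rfl⟩ hScnt
  -- now `S = {u}` and `Sᶜ = {v}`, so there is no third vertex
  rw [not_nontrivial_iff_subsingleton] at hSnt hScnt
  refine ⟨u, v, fun h => huv (h ▸ .rfl), fun w hwu hwv => ?_⟩
  by_cases hw : w ∈ S
  · exact absurd (congrArg Subtype.val (Subsingleton.elim (⟨w, hw⟩ : S) ⟨u, .rfl⟩)) hwu
  · exact absurd (congrArg Subtype.val (Subsingleton.elim (⟨w, hw⟩ : ↥Sᶜ) ⟨v, huv⟩)) hwv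

def pathGraphFourEmbedding {a b c d : V} (hab : G.Adj a b) (hbc : G.Adj b c) (hcd : G.Adj c d)
    (hac : ¬G.Adj a c) (had : ¬G.Adj a d) (hbd : ¬G.Adj b d) : pathGraph 4 ↪g G where
  toFun := ![a, b, c, d]
  inj' := by
    have : a ≠ d := by rintro rfl; exact hac hcd.symm
    intro i j hij
    fin_cases i <;> fin_cases j <;> simp_all [hab.ne, hbc.ne, hcd.ne]
  map_rel_iff' := by
    intro i j
    change G.Adj (![a, b, c, d] i) (![a, b, c, d] j) ↔ _
    have := hab.symm; have := hbc.symm; have := hcd.symm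
    have : ¬G.Adj c a := fun h => hac h.symm
    have : ¬G.Adj d a := fun h => had h.symm
    have : ¬G.Adj d b := fun h => hbd h.symm
    fin_cases i <;> fin_cases j <;> simp_all [pathGraph_adj]

end SimpleGraph

open SimpleGraph

namespace IsCograph

variable {V : Type*} {G : SimpleGraph V}

theorem induce (hG : IsCograph G) (S : Set V) : IsCograph (G.induce S) :=
  ⟨fun e => hG.false ((Embedding.induce S).comp e)⟩

/-- `P₄` is self-complementary: its complement is the path `1 - 3 - 0 - 2`. -/
theorem compl (hG : IsCograph G) : IsCograph Gᶜ := by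
  refine ⟨fun e => hG.false ?_⟩
  have adj : ∀ i j, i ≠ j → ¬(pathGraph 4).Adj i j → G.Adj (e i) (e j) := fun i j hij hn => by
    simpa [compl_adj, e.injective.ne hij] using (e.map_adj_iff (v := i) (w := j)).not.2 hn
  have nadj : ∀ i j, (pathGraph 4).Adj i j → ¬G.Adj (e i) (e j) := fun i j h =>
    ((compl_adj _ _ _).1 (e.map_adj_iff.2 h)).2
  exact pathGraphFourEmbedding (adj 1 3 (by decide) (by simp [pathGraph_adj]))
    (adj 3 0 (by decide) (by simp [pathGraph_adj])) (adj 0 2 (by decide) (by simp [pathGraph_adj]))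
    (nadj 1 0 (by simp [pathGraph_adj])) (nadj 1 2 (by simp [pathGraph_adj]))
    (nadj 3 2 (by simp [pathGraph_adj]))

theorem preconnected_induce_compl_singleton (hG : IsCograph G) (h : G.Preconnected)
    (hc : Gᶜ.Preconnected) (x : V) : (G.induce {x}ᶜ).Preconnected := by
  by_contra hx
  set H := G.induce {x}ᶜ
  -- otherwise the component of `a` in `G - x` would be a component of `G`
  have hnbr : ∀ a : ({x}ᶜ : Set V), ∃ b, H.Reachable a b ∧ G.Adj x b := by
    intro a
    by_contra! hno
    refine not_reachable_of_forall_adj_mem (S := {v | ∃ hv : v ≠ x, H.Reachable a ⟨v, hv⟩})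
      ?_ ⟨a.2, .rfl⟩ (fun ⟨hxx, _⟩ => hxx rfl) (h a x)
    rintro v ⟨hv, hav⟩ w hvw
    have hwx : w ≠ x := by
      rintro rfl
      exact hno _ hav hvw.symm
    exact ⟨hwx, hav.trans (show H.Adj ⟨v, hv⟩ ⟨w, hwx⟩ from hvw).reachable⟩
  obtain ⟨a, b, hab⟩ : ∃ a b, ¬H.Reachable a b := by
    simpa only [Preconnected, not_forall] using hx
  obtain ⟨y, hxy⟩ : ∃ y : ({x}ᶜ : Set V), ¬G.Adj x y := by
    by_contra! hall
    refine not_reachable_of_forall_adj_mem (G := Gᶜ) (S := {x}) ?_ rfl a.2 (hc x a)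
    rintro _ rfl w hw
    by_contra hwx
    exact ((compl_adj _ _ _).1 hw).2 (hall ⟨w, hwx⟩)
  obtain ⟨c, hyc⟩ : ∃ c, ¬H.Reachable y c := by
    by_contra! hyall
    exact hab ((hyall a).symm.trans (hyall b))
  obtain ⟨a', hya', hxa'⟩ := hnbr y
  obtain ⟨p, q, hyp, hpq, hxp, hxq⟩ :=
    hya'.exists_adj_boundary (P := fun v : ({x}ᶜ : Set V) => ¬G.Adj x v) hxy (not_not.2 hxa')
  obtain ⟨d, hcd, hxd⟩ := hnbr c
  have hyd : ¬H.Reachable y d := fun h => hyc (h.trans hcd.symm)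
  have hpd : ¬G.Adj p d := fun h => hyd (hyp.trans (Adj.reachable (G := H) h))
  have hqd : ¬G.Adj q d := fun h =>
    hyd ((hyp.trans hpq.reachable).trans (Adj.reachable (G := H) h))
  exact hG.false (pathGraphFourEmbedding hpq (not_not.1 hxq).symm hxd (fun h => hxp h.symm) hpd hqd)

theorem not_preconnected_or_not_preconnected_compl [Finite V] [Nontrivial V]
    (hG : IsCograph G) : ¬G.Preconnected ∨ ¬Gᶜ.Preconnected := by
  revert ‹Nontrivial V›
  induction V using Finite.induction_subsingleton_or_nontrivial with
  | hbase V => exact (not_nontrivial V ‹_›).elim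
  | hstep V ih =>
    intro _
    by_contra! ⟨h, hc⟩
    obtain ⟨x⟩ := ‹Nontrivial V›.to_nonempty
    obtain ⟨y, hxy⟩ : ∃ y, G.Adj x y := by
      by_contra! hx
      exact not_preconnected_of_forall_not_adj hx h
    obtain ⟨z, hxz⟩ : ∃ z, Gᶜ.Adj x z := by
      by_contra! hx
      exact not_preconnected_of_forall_not_adj hx hc
    rw [compl_adj] at hxz
    have : Nontrivial ({x}ᶜ : Set V) :=
      ⟨⟨y, hxy.ne.symm⟩, ⟨z, hxz.1.symm⟩, fun hyz => hxz.2 (Subtype.mk.inj hyz ▸ hxy)⟩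
    rcases ih _ (Finite.card_subtype_lt (not_not.2 rfl)) (hG.induce {x}ᶜ) with hH | hH
    · exact hH (hG.preconnected_induce_compl_singleton h hc x)
    · rw [← induce_compl] at hH
      exact hH (hG.compl.preconnected_induce_compl_singleton hc (by rwa [compl_compl]) x)

theorem exists_twins [Finite V] [Nontrivial V] (hG : IsCograph G) :
    ∃ u v, u ≠ v ∧ G.Twins u v := by
  revert ‹Nontrivial V›
  induction V using Finite.induction_subsingleton_or_nontrivial with
  | hbase V => exact (not_nontrivial V ‹_›).elim
  | hstep V ih =>
    intro _
    have twins_of_not_preconnected (K : SimpleGraph V) (hK : IsCograph K)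
        (hdis : ¬K.Preconnected) : ∃ u v, u ≠ v ∧ K.Twins u v :=
      exists_twins_of_not_preconnected hdis fun S ⟨_, hw⟩ _ =>
        ih S (Finite.card_subtype_lt hw) (hK.induce S)
    rcases hG.not_preconnected_or_not_preconnected_compl with h | h
    · exact twins_of_not_preconnected G hG h
    · simpa using twins_of_not_preconnected Gᶜ hG.compl h

end IsCograph

theorem cograph_has_twins {V : Type*} [Fintype V] (G : SimpleGraph V)
    (hG : IsCograph G) (hcard : 2 ≤ Fintype.card V) :
    ∃ u v : V, u ≠ v ∧
      ((¬ G.Adj u v ∧ ∀ w, G.Adj u w ↔ G.Adj v w) ∨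
       (G.Adj u v ∧ ∀ w, w ≠ u → w ≠ v → (G.Adj u w ↔ G.Adj v w))) := by
  have : Nontrivial V := Fintype.one_lt_card_iff_nontrivial.1 hcard
  obtain ⟨u, v, huv, htw⟩ := hG.exists_twins
  refine ⟨u, v, huv, ?_⟩
  by_cases hadj : G.Adj u v
  · exact .inr ⟨hadj, htw⟩
  · exact .inl ⟨hadj, htw.adj_iff_adj_of_not_adj hadj⟩
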